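/- Let M = (M_1,…,M_n) and N = (N_1,…,N_n) be n-outcome POVMs on ℂ^d, let Λ be an n'×n left-stochastic matrix (real entries Λ_{ij} ≥ 0 with ∑_{i=1}^{n'} Λ_{ij} = 1 for every j), and let Φ be a unital quantum channel on ℂ^d with Hilbert–Schmidt adjoint Φ*. Then the n'-outcome POVMs with effects (∑_{j=1}^n Λ_{ij} Φ*(M_j))_{i=1,…,n'} and (∑_{j=1}^n Λ_{ij} Φ*(N_j))_{i=1,…,n'} satisfy d_av^m(Λ∘M∘Φ, Λ∘N∘Φ) ≤ d_av^m(M, N). -/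

import Mathlib

/-!
With `v(A) = (A, Re tr A)`, a real-linear map into a Euclidean space, each summand of
`d_av^m` is `‖v(Mᵢ - Nᵢ)‖`, so `d_av^m` is a sum of norms. The classical post-processing `Λ`
is then absorbed by the triangle inequality and column-stochasticity, and the quantum
pre-processing only needs `Φ*` to preserve traces (since `Φ` is unital) and not to increase
the Hilbert–Schmidt norm. The latter holds for `Φ` through a Kraus decomposition
`Φ(X) = ∑ Kₖ X Kₖᴴ` with `∑ Kₖ Kₖᴴ = ∑ Kₖᴴ Kₖ = 1`, and passes to `Φ*` by Cauchy–Schwarz.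
-/

open Matrix Kronecker ComplexOrder

/-- The Hilbert–Schmidt (Frobenius) norm of a complex matrix. -/
noncomputable def hsNorm {n : Type*} [Fintype n] (A : Matrix n n ℂ) : ℝ :=
  Real.sqrt ((Matrix.trace (Aᴴ * A)).re)

/-- A POVM: a tuple of positive semidefinite effects summing to the identity. -/
def IsPOVM {n : Type*} [Fintype n] [DecidableEq n] {ι : Type*} [Fintype ι]
    (M : ι → Matrix n n ℂ) : Prop :=
  (∀ i, (M i).PosSemidef) ∧ ∑ i, M i = 1

/-- The average-case distance between POVMs on a `Fintype.card n`-dimensional space. -/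
noncomputable def davM {n : Type*} [Fintype n] {ι : Type*} [Fintype ι]
    (M N : ι → Matrix n n ℂ) : ℝ :=
  (1 / (2 * (Fintype.card n : ℝ))) *
    ∑ i, Real.sqrt ((hsNorm (M i - N i)) ^ 2 + ((Matrix.trace (M i - N i)).re) ^ 2)

/-- The (normalized) Choi matrix `J_Λ = (1/d) ∑ᵢⱼ E_ij ⊗ Λ(E_ij)` of a linear map on matrices. -/
noncomputable def choi {n : Type*} [Fintype n] [DecidableEq n]
    (Λ : Matrix n n ℂ →ₗ[ℂ] Matrix n n ℂ) : Matrix (n × n) (n × n) ℂ :=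
  ((Fintype.card n : ℂ))⁻¹ •
    ∑ i, ∑ j, (Matrix.single i j (1 : ℂ)) ⊗ₖ Λ (Matrix.single i j (1 : ℂ))

/-- A quantum channel: a completely positive (positive semidefinite Choi matrix)
trace-preserving linear map. -/
def IsChannel {n : Type*} [Fintype n] [DecidableEq n]
    (Λ : Matrix n n ℂ →ₗ[ℂ] Matrix n n ℂ) : Prop :=
  (choi Λ).PosSemidef ∧ ∀ X, (Λ X).trace = X.trace

section HilbertSchmidt

variable {m : Type*}

noncomputable def hsVec : Matrix m m ℂ →ₗ[ℂ] EuclideanSpace ℂ (m × m) where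
  toFun A := WithLp.toLp 2 fun p => A p.1 p.2
  map_add' _ _ := rfl
  map_smul' _ _ := rfl

@[simp]
lemma hsVec_apply (A : Matrix m m ℂ) (p : m × m) : hsVec A p = A p.1 p.2 := rfl

variable [Fintype m]

lemma inner_hsVec (A B : Matrix m m ℂ) : inner ℂ (hsVec A) (hsVec B) = (Aᴴ * B).trace := by
  simp only [PiLp.inner_apply, RCLike.inner_apply, hsVec_apply, Matrix.trace, Matrix.diag,
    Matrix.mul_apply, Matrix.conjTranspose_apply, Fintype.sum_prod_type]
  rw [Finset.sum_comm]
  simp [mul_comm]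

lemma re_inner_hsVec (A B : Matrix m m ℂ) :
    RCLike.re (inner ℂ (hsVec A) (hsVec B)) = (Aᴴ * B).trace.re :=
  congrArg Complex.re (inner_hsVec A B)

lemma hsNorm_eq_norm_hsVec (A : Matrix m m ℂ) : hsNorm A = ‖hsVec A‖ := by
  rw [hsNorm, ← re_inner_hsVec, inner_self_eq_norm_sq, Real.sqrt_sq (norm_nonneg _)]

lemma hsNorm_nonneg (A : Matrix m m ℂ) : 0 ≤ hsNorm A :=
  Real.sqrt_nonneg _

lemma hsNorm_sq (A : Matrix m m ℂ) : hsNorm A ^ 2 = (Aᴴ * A).trace.re := by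
  rw [hsNorm_eq_norm_hsVec, ← re_inner_hsVec, inner_self_eq_norm_sq]

lemma re_trace_conjTranspose_mul_le (A B : Matrix m m ℂ) :
    (Aᴴ * B).trace.re ≤ hsNorm A * hsNorm B := by
  rw [hsNorm_eq_norm_hsVec, hsNorm_eq_norm_hsVec, ← re_inner_hsVec]
  exact re_inner_le_norm _ _

end HilbertSchmidt

section Kraus

variable {m : Type*} [Fintype m] [DecidableEq m]

lemma choi_apply (Φ : Matrix m m ℂ →ₗ[ℂ] Matrix m m ℂ) (i j k l : m) :
    choi Φ (i, k) (j, l) = (Fintype.card m : ℂ)⁻¹ * Φ (Matrix.single i j 1) k l := by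
  simp [choi, Matrix.sum_apply, Matrix.kroneckerMap_apply, Matrix.single, ite_and]

lemma exists_kraus_of_posSemidef_choi (Φ : Matrix m m ℂ →ₗ[ℂ] Matrix m m ℂ)
    (hΦ : (choi Φ).PosSemidef) :
    ∃ (r : ℕ) (K : Fin r → Matrix m m ℂ), ∀ Y, Φ Y = ∑ q, K q * Y * (K q)ᴴ := by
  cases isEmpty_or_nonempty m
  · exact ⟨0, Fin.elim0, fun _ => Subsingleton.elim _ _⟩
  have hcard : (Fintype.card m : ℂ) ≠ 0 := by simp
  -- `card m • choi Φ` has entries `Φ(Eᵢⱼ)ₖₗ`; its rank-one pieces `v vᴴ` give the Kraus operators.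
  obtain ⟨r, v, hv⟩ := Matrix.posSemidef_iff_eq_sum_vecMulVec.mp
    (hΦ.smul (a := (Fintype.card m : ℂ)) (by positivity))
  refine ⟨r, fun q => Matrix.of fun k i => v q (i, k), fun Y => ?_⟩
  induction Y using Matrix.induction_on' with
  | h_zero => simp
  | h_add p q hp hq => simp only [map_add, hp, hq, Matrix.mul_add, Matrix.add_mul,
      Finset.sum_add_distrib]
  | h_std_basis i j x =>
    ext k l
    have hkl := congrFun₂ hv (i, k) (j, l)
    simp only [Matrix.smul_apply, choi_apply, smul_eq_mul, mul_inv_cancel_left₀ hcard,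
      Matrix.sum_apply, Matrix.vecMulVec_apply, Pi.star_apply, RCLike.star_def] at hkl
    rw [← mul_one x, ← smul_eq_mul, ← Matrix.smul_single, map_smul, Matrix.smul_apply, hkl]
    simp only [smul_eq_mul, Finset.mul_sum, Matrix.single, ite_and, Matrix.smul_of,
      Matrix.sum_apply, Matrix.mul_apply, Matrix.of_apply, Pi.smul_apply, mul_ite, mul_one,
      mul_zero, Finset.sum_ite_eq, Finset.mem_univ, ↓reduceIte, Matrix.conjTranspose_apply,
      RCLike.star_def, ite_mul, zero_mul]
    exact Finset.sum_congr rfl fun _ _ => by ring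

end Kraus

section KrausFamily

variable {m ι : Type*} [Fintype m] [Fintype ι]

lemma hsNorm_conjTranspose (A : Matrix m m ℂ) : hsNorm Aᴴ = hsNorm A := by
  rw [hsNorm, hsNorm, Matrix.conjTranspose_conjTranspose, Matrix.trace_mul_comm]

variable [DecidableEq m]

lemma sum_hsNorm_mul_sq_of_sum_conjTranspose_mul_eq_one (T : ι → Matrix m m ℂ)
    (hT : ∑ q, (T q)ᴴ * T q = 1) (X : Matrix m m ℂ) :
    ∑ q, hsNorm (T q * X) ^ 2 = hsNorm X ^ 2 := by
  have h : ∑ q, (T q * X)ᴴ * (T q * X) = Xᴴ * X := by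
    calc ∑ q, (T q * X)ᴴ * (T q * X) = ∑ q, Xᴴ * ((T q)ᴴ * T q * X) := by
          simp only [Matrix.conjTranspose_mul, Matrix.mul_assoc]
      _ = Xᴴ * X := by rw [← Finset.mul_sum, ← Finset.sum_mul, hT, Matrix.one_mul]
  simp only [hsNorm_sq, ← Complex.re_sum, ← Matrix.trace_sum, h]

lemma sum_hsNorm_mul_sq_of_sum_mul_conjTranspose_eq_one (T : ι → Matrix m m ℂ)
    (hT : ∑ q, T q * (T q)ᴴ = 1) (X : Matrix m m ℂ) :
    ∑ q, hsNorm (X * T q) ^ 2 = hsNorm X ^ 2 := by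
  rw [← hsNorm_conjTranspose X, ← sum_hsNorm_mul_sq_of_sum_conjTranspose_mul_eq_one
    (fun q => (T q)ᴴ) (by simpa only [Matrix.conjTranspose_conjTranspose] using hT)]
  simp only [← hsNorm_conjTranspose (X * _), Matrix.conjTranspose_mul]

lemma sum_conjTranspose_mul_eq_one_of_trace_eq (K : ι → Matrix m m ℂ)
    (hK : ∀ Y, (∑ q, K q * Y * (K q)ᴴ).trace = Y.trace) : ∑ q, (K q)ᴴ * K q = 1 := by
  refine Matrix.ext_iff_trace_mul_left.mpr fun Y => ?_
  rw [Matrix.mul_one, ← hK Y, Finset.mul_sum, Matrix.trace_sum, Matrix.trace_sum]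
  refine Finset.sum_congr rfl fun q _ => ?_
  rw [Matrix.trace_mul_cycle, Matrix.trace_mul_comm, Matrix.mul_assoc]

lemma hsNorm_sum_mul_mul_conjTranspose_le (K : ι → Matrix m m ℂ)
    (hK : ∑ q, K q * (K q)ᴴ = 1) (hK' : ∑ q, (K q)ᴴ * K q = 1) (X : Matrix m m ℂ) :
    hsNorm (∑ q, K q * X * (K q)ᴴ) ≤ hsNorm X := by
  set T : ι × ι → Matrix m m ℂ := fun q => (K q.1)ᴴ * K q.2 with hT
  have hsandwich : ∀ k, ∑ l, (K k)ᴴ * (K l * (K l)ᴴ) * K k = (K k)ᴴ * K k := fun k => by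
    rw [← Finset.sum_mul, ← Finset.mul_sum, hK, Matrix.mul_one]
  have hT1 : ∑ q, (T q)ᴴ * T q = 1 := by
    rw [Fintype.sum_prod_type, Finset.sum_comm, ← hK']
    refine Finset.sum_congr rfl fun k _ => ?_
    rw [← hsandwich]
    simp only [hT, Matrix.conjTranspose_mul, Matrix.conjTranspose_conjTranspose, Matrix.mul_assoc]
  have hT2 : ∑ q, T q * (T q)ᴴ = 1 := by
    rw [Fintype.sum_prod_type, ← hK']
    refine Finset.sum_congr rfl fun k _ => ?_
    rw [← hsandwich]
    simp only [hT, Matrix.conjTranspose_mul, Matrix.conjTranspose_conjTranspose, Matrix.mul_assoc]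
  have hexpand : hsNorm (∑ q, K q * X * (K q)ᴴ) ^ 2 = ∑ q, ((X * T q)ᴴ * (T q * X)).trace.re := by
    simp only [hsNorm_sq, Matrix.conjTranspose_sum, Finset.sum_mul_sum, Matrix.trace_sum,
      Complex.re_sum, Fintype.sum_prod_type]
    refine Finset.sum_congr rfl fun k _ => Finset.sum_congr rfl fun l _ => ?_
    simp only [hT, Matrix.conjTranspose_mul, Matrix.conjTranspose_conjTranspose,
      Matrix.mul_assoc]
    rw [Matrix.trace_mul_comm (K l)ᴴ]
    simp only [Matrix.mul_assoc]
  -- Cauchy–Schwarz followed by AM–GM.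
  have hterm : ∀ q, ((X * T q)ᴴ * (T q * X)).trace.re
      ≤ (hsNorm (X * T q) ^ 2 + hsNorm (T q * X) ^ 2) / 2 := fun q => by
    nlinarith [re_trace_conjTranspose_mul_le (X * T q) (T q * X),
      sq_nonneg (hsNorm (X * T q) - hsNorm (T q * X))]
  refine (pow_le_pow_iff_left₀ (hsNorm_nonneg _) (hsNorm_nonneg X) two_ne_zero).mp ?_
  calc hsNorm (∑ q, K q * X * (K q)ᴴ) ^ 2 = ∑ q, ((X * T q)ᴴ * (T q * X)).trace.re := hexpand
    _ ≤ ∑ q, (hsNorm (X * T q) ^ 2 + hsNorm (T q * X) ^ 2) / 2 :=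
      Finset.sum_le_sum fun q _ => hterm q
    _ = hsNorm X ^ 2 := by
      rw [← Finset.sum_div, Finset.sum_add_distrib,
        sum_hsNorm_mul_sq_of_sum_mul_conjTranspose_eq_one T hT2,
        sum_hsNorm_mul_sq_of_sum_conjTranspose_mul_eq_one T hT1]
      ring

end KrausFamily

section Channel

variable {m : Type*} [Fintype m]

lemma IsChannel.hsNorm_map_le [DecidableEq m] {Φ : Matrix m m ℂ →ₗ[ℂ] Matrix m m ℂ}
    (hΦ : IsChannel Φ) (hunital : Φ 1 = 1) (X : Matrix m m ℂ) : hsNorm (Φ X) ≤ hsNorm X := by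
  obtain ⟨r, K, hK⟩ := exists_kraus_of_posSemidef_choi Φ hΦ.1
  have hK1 : ∑ q, K q * (K q)ᴴ = 1 := by simpa [hK] using hunital
  have hK2 := sum_conjTranspose_mul_eq_one_of_trace_eq K fun Y => by rw [← hK, hΦ.2]
  rw [hK]
  exact hsNorm_sum_mul_mul_conjTranspose_le K hK1 hK2 X

lemma hsNorm_le_of_adjoint {Φ Ψ : Matrix m m ℂ → Matrix m m ℂ}
    (hΦ : ∀ X, hsNorm (Φ X) ≤ hsNorm X)
    (hadj : ∀ A B, (Aᴴ * Φ B).trace = ((Ψ A)ᴴ * B).trace) (X : Matrix m m ℂ) :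
    hsNorm (Ψ X) ≤ hsNorm X := by
  have key : hsNorm (Ψ X) ^ 2 ≤ hsNorm X * hsNorm (Ψ X) :=
    calc hsNorm (Ψ X) ^ 2 = (Xᴴ * Φ (Ψ X)).trace.re := by rw [hsNorm_sq, hadj]
      _ ≤ hsNorm X * hsNorm (Φ (Ψ X)) := re_trace_conjTranspose_mul_le _ _
      _ ≤ hsNorm X * hsNorm (Ψ X) := mul_le_mul_of_nonneg_left (hΦ _) (hsNorm_nonneg X)
  nlinarith [hsNorm_nonneg (Ψ X), hsNorm_nonneg X]

lemma trace_eq_of_adjoint_of_map_one [DecidableEq m] {Φ Ψ : Matrix m m ℂ → Matrix m m ℂ}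
    (hunital : Φ 1 = 1) (hadj : ∀ A B, (Aᴴ * Φ B).trace = ((Ψ A)ᴴ * B).trace)
    (A : Matrix m m ℂ) : (Ψ A).trace = A.trace := by
  have h := hadj A 1
  rw [hunital, Matrix.mul_one, Matrix.mul_one, Matrix.trace_conjTranspose,
    Matrix.trace_conjTranspose] at h
  exact star_injective h.symm

end Channel

section AverageCaseDistance

variable {m : Type*} [Fintype m]

noncomputable def davVec : Matrix m m ℂ →ₗ[ℝ] WithLp 2 (EuclideanSpace ℂ (m × m) × ℝ) :=
  (WithLp.linearEquiv 2 ℝ _).symm.toLinearMap ∘ₗ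
    (hsVec.restrictScalars ℝ).prod (Complex.reLm ∘ₗ Matrix.traceLinearMap m ℝ ℂ)

lemma norm_davVec (A : Matrix m m ℂ) : ‖davVec A‖ = √(hsNorm A ^ 2 + A.trace.re ^ 2) := by
  simp [WithLp.prod_norm_eq_of_L2, davVec, hsNorm_eq_norm_hsVec]

lemma davM_eq_sum_norm_davVec {ι : Type*} [Fintype ι] (M N : ι → Matrix m m ℂ) :
    davM M N = 1 / (2 * (Fintype.card m : ℝ)) * ∑ i, ‖davVec (M i - N i)‖ := by
  simp only [davM, norm_davVec]

lemma norm_davVec_sum_smul_le {κ : Type*} [Fintype κ] {Ψ : Matrix m m ℂ → Matrix m m ℂ}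
    (hΨ : ∀ X, hsNorm (Ψ X) ≤ hsNorm X) (htr : ∀ X, (Ψ X).trace = X.trace)
    (l : κ → ℝ) (hl : ∀ j, 0 ≤ l j) (A : κ → Matrix m m ℂ) :
    ‖davVec (∑ j, (l j : ℂ) • Ψ (A j))‖ ≤ ∑ j, l j * ‖davVec (A j)‖ := by
  rw [map_sum]
  refine (norm_sum_le _ _).trans (Finset.sum_le_sum fun j _ => ?_)
  rw [Complex.coe_smul, map_smul, norm_smul, Real.norm_of_nonneg (hl j), norm_davVec,
    norm_davVec, htr]
  have hsq : hsNorm (Ψ (A j)) ^ 2 ≤ hsNorm (A j) ^ 2 :=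
    pow_le_pow_left₀ (hsNorm_nonneg _) (hΨ (A j)) 2
  gcongr
  exact hl j

end AverageCaseDistance

theorem statement10_general (d n n' : ℕ)
    (M N : Fin n → Matrix (Fin d) (Fin d) ℂ)
    (Λ : Fin n' → Fin n → ℝ) (hΛpos : ∀ i j, 0 ≤ Λ i j)
    (hΛstoch : ∀ j, ∑ i, Λ i j = 1)
    (Φ Φstar : Matrix (Fin d) (Fin d) ℂ →ₗ[ℂ] Matrix (Fin d) (Fin d) ℂ)
    (hΦ : IsChannel Φ) (hΦunital : Φ 1 = 1)
    (hadj : ∀ A B : Matrix (Fin d) (Fin d) ℂ,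
      Matrix.trace (Aᴴ * Φ B) = Matrix.trace ((Φstar A)ᴴ * B)) :
    davM (fun i : Fin n' => ∑ j, (Λ i j : ℂ) • Φstar (M j))
        (fun i : Fin n' => ∑ j, (Λ i j : ℂ) • Φstar (N j)) ≤
      davM M N := by
  have hcontr : ∀ X, hsNorm (Φstar X) ≤ hsNorm X :=
    hsNorm_le_of_adjoint (hΦ.hsNorm_map_le hΦunital) hadj
  have htr : ∀ X, (Φstar X).trace = X.trace := trace_eq_of_adjoint_of_map_one hΦunital hadj
  rw [davM_eq_sum_norm_davVec, davM_eq_sum_norm_davVec]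
  refine mul_le_mul_of_nonneg_left ?_ (by positivity)
  calc ∑ i, ‖davVec (∑ j, (Λ i j : ℂ) • Φstar (M j) - ∑ j, (Λ i j : ℂ) • Φstar (N j))‖
      = ∑ i, ‖davVec (∑ j, (Λ i j : ℂ) • Φstar (M j - N j))‖ := by
        simp only [← Finset.sum_sub_distrib, ← smul_sub, ← map_sub]
    _ ≤ ∑ i, ∑ j, Λ i j * ‖davVec (M j - N j)‖ :=
        Finset.sum_le_sum fun i _ => norm_davVec_sum_smul_le hcontr htr _ (hΛpos i) _
    _ = ∑ j, ‖davVec (M j - N j)‖ := by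
        rw [Finset.sum_comm]
        simp only [← Finset.sum_mul, hΛstoch, one_mul]

theorem statement10 (d n n' : ℕ)
    (M N : Fin n → Matrix (Fin d) (Fin d) ℂ) (hM : IsPOVM M) (hN : IsPOVM N)
    (Λ : Fin n' → Fin n → ℝ) (hΛpos : ∀ i j, 0 ≤ Λ i j)
    (hΛstoch : ∀ j, ∑ i, Λ i j = 1)
    (Φ Φstar : Matrix (Fin d) (Fin d) ℂ →ₗ[ℂ] Matrix (Fin d) (Fin d) ℂ)
    (hΦ : IsChannel Φ) (hΦunital : Φ 1 = 1)
    (hadj : ∀ A B : Matrix (Fin d) (Fin d) ℂ,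
      Matrix.trace (Aᴴ * Φ B) = Matrix.trace ((Φstar A)ᴴ * B)) :
    davM (fun i : Fin n' => ∑ j, (Λ i j : ℂ) • Φstar (M j))
        (fun i : Fin n' => ∑ j, (Λ i j : ℂ) • Φstar (N j)) ≤
      davM M N :=
  statement10_general d n n' M N Λ hΛpos hΛstoch Φ Φstar hΦ hΦunital hadj
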